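/- arXiv:1909.10930 — 2 statements merged into one kernel-verified Lean document; each statement's English description precedes it below -/
import Mathlib

section
/- For all real x ≥ 2, the sum over primes p ≤ x of (log p)/p equals log x + O(1); i.e., there exists a constant M such that for all x ≥ 2, |∑_{p ≤ x, p prime} (log p)/p − log x| ≤ M. -/
/-!
By Legendre, `log n! = ∑_{p ≤ n} v_p(n!) log p`, and `⌊n / p⌋ ≤ v_p(n!) ≤ n / (p - 1)`.
Since `log n! = n log n + O(n)`, dividing by `n` leaves `∑_{p ≤ n} log p / p` within `O(1)`
of `log n`: the lower bound on `v_p(n!)` costs `θ(n) / n ≤ log 4` (Chebyshev), the upper one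
costs `∑_p log p / (p (p - 1))`, a convergent series.
-/

open Finset Real
open scoped Nat

namespace Nat

variable {p : ℕ}

theorem div_le_factorization_factorial (hp : p.Prime) (n : ℕ) :
    n / p ≤ (n !).factorization p := by
  have := Fact.mk hp
  rw [factorization_def _ hp, padicValNat_factorial (b := log p n + 2) (by omega)]
  simpa using single_le_sum (f := fun i => n / p ^ i) (fun _ _ => Nat.zero_le _)
    (show 1 ∈ Ico 1 (log p n + 2) by simp)

theorem sub_one_mul_factorization_factorial_le (hp : p.Prime) (n : ℕ) :
    (p - 1) * (n !).factorization p ≤ n := by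
  have := Fact.mk hp
  rw [factorization_def _ hp, sub_one_mul_padicValNat_factorial]
  exact n.sub_le _

end Nat

namespace Real

theorem log_factorial_eq_sum_primesLE (n : ℕ) :
    log (n ! : ℕ) = ∑ p ∈ n.primesLE, (n !).factorization p * log p := by
  rw [log_nat_eq_sum_factorization]
  refine Finsupp.sum_of_support_subset _ (fun p hp => ?_) _ (fun _ _ => by simp)
  rw [Nat.support_factorization, Nat.mem_primeFactors] at hp
  exact Nat.mem_primesLE.2 ⟨(hp.1.dvd_factorial).1 hp.2.1, hp.1⟩

theorem log_div_mul_sub_one_nonneg (n : ℕ) : 0 ≤ log n / (n * (n - 1)) := by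
  refine div_nonneg (log_natCast_nonneg n) ?_
  rcases n with _ | n
  · simp
  · simp only [Nat.cast_add_one, add_sub_cancel_right]
    positivity

theorem summable_log_div_mul_sub_one :
    Summable fun n : ℕ => log n / (n * (n - 1)) := by
  refine ((summable_nat_rpow.2 (show (-3 / 2 : ℝ) < -1 by norm_num)).mul_left 4).of_nonneg_of_le
    log_div_mul_sub_one_nonneg (fun n => ?_)
  rcases lt_or_ge n 2 with hn | hn
  · interval_cases n <;> simp
  have hn' : (2 : ℝ) ≤ n := by exact_mod_cast hn
  calc log n / (n * (n - 1)) ≤ n ^ (1 / 2 : ℝ) / (1 / 2) / (n ^ 2 / 2) := by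
        gcongr ?_ / ?_
        · exact log_le_rpow_div (by positivity) (by norm_num)
        · nlinarith
    _ = 4 * n ^ (-3 / 2 : ℝ) := by
        rw [show (-3 / 2 : ℝ) = 1 / 2 - 2 by norm_num, rpow_sub (by positivity), rpow_two]
        ring

theorem log_factorial_le (n : ℕ) : log (n ! : ℕ) ≤ n * log n := by
  rw [← log_pow]
  gcongr
  exact_mod_cast n.factorial_le_pow

theorem mul_log_sub_le_log_factorial (n : ℕ) : n * log n - n ≤ log (n ! : ℕ) := by
  rcases n.eq_zero_or_pos with rfl | hn
  · simp
  have h := log_le_log (by positivity) (pow_div_factorial_le_exp (n : ℝ) n.cast_nonneg n)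
  rw [log_div (by positivity) (by positivity), log_pow, log_exp] at h
  linarith

theorem sum_primesLE_log_div_le (n : ℕ) : ∑ p ∈ n.primesLE, log p / p ≤ log n + log 4 := by
  rcases n.eq_zero_or_pos with rfl | hn
  · simp [Nat.primesLE_zero, log_nonneg]
  have hn' : (0 : ℝ) < n := by exact_mod_cast hn
  have hdiv (p : ℕ) (hp : p ∈ n.primesLE) : (n : ℝ) / p ≤ (n !).factorization p + 1 := by
    have hp := (Nat.mem_primesLE.1 hp).2
    calc (n : ℝ) / p ≤ ⌊(n : ℝ) / p⌋₊ + 1 := (Nat.lt_floor_add_one _).le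
      _ ≤ (n !).factorization p + 1 := by
        rw [Nat.floor_div_eq_div]
        exact_mod_cast add_le_add_left (Nat.div_le_factorization_factorial hp n) 1
  suffices n * ∑ p ∈ n.primesLE, log p / p ≤ n * (log n + log 4) from
    le_of_mul_le_mul_left this hn'
  calc n * ∑ p ∈ n.primesLE, log p / p = ∑ p ∈ n.primesLE, n / p * log p := by
        rw [mul_sum]; congr! 1 with p; ring
    _ ≤ ∑ p ∈ n.primesLE, ((n !).factorization p + 1) * log p := by
        gcongr with p hp
        exact hdiv p hp
    _ = log (n ! : ℕ) + Chebyshev.theta n := by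
        rw [log_factorial_eq_sum_primesLE, Chebyshev.theta_eq_sum_primesLE_log, ← sum_add_distrib]
        congr! 1 with p; ring
    _ ≤ n * log n + log 4 * n :=
        add_le_add (log_factorial_le n) (Chebyshev.theta_le_log4_mul_x hn'.le)
    _ = n * (log n + log 4) := by ring

theorem log_sub_le_sum_primesLE_log_div {n : ℕ} (hn : 0 < n) :
    log n - 1 - ∑' m : ℕ, log m / (m * (m - 1)) ≤ ∑ p ∈ n.primesLE, log p / p := by
  have hn' : (0 : ℝ) < n := by exact_mod_cast hn
  have hval (p : ℕ) (hp : p ∈ n.primesLE) :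
      (n !).factorization p * log p ≤ n * (log p / p + log p / (p * (p - 1))) := by
    have hp := (Nat.mem_primesLE.1 hp).2
    have hp1 : (1 : ℝ) < p := by exact_mod_cast hp.one_lt
    have h := Nat.cast_le (α := ℝ).2 (Nat.sub_one_mul_factorization_factorial_le hp n)
    push_cast [hp.one_le] at h
    calc ((n !).factorization p : ℝ) * log p ≤ n / (p - 1) * log p := by
          gcongr
          rw [le_div_iff₀ (by linarith), mul_comm]
          exact h
      _ = n * (log p / p + log p / (p * (p - 1))) := by
          have : (p : ℝ) - 1 ≠ 0 := by linarith
          field_simp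
          ring
  have hfac : log (n ! : ℕ) ≤ n * ∑ p ∈ n.primesLE, log p / p +
      n * ∑ p ∈ n.primesLE, log p / (p * (p - 1)) := by
    rw [log_factorial_eq_sum_primesLE, ← mul_add, ← sum_add_distrib, mul_sum]
    exact sum_le_sum hval
  have htail :
      ∑ p ∈ n.primesLE, log p / (p * (p - 1)) ≤ ∑' m : ℕ, log m / (m * (m - 1)) :=
    summable_log_div_mul_sub_one.sum_le_tsum _ fun m _ => log_div_mul_sub_one_nonneg m
  suffices n * (log n - 1 - ∑' m : ℕ, log m / (m * (m - 1))) ≤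
      n * ∑ p ∈ n.primesLE, log p / p from le_of_mul_le_mul_left this hn'
  nlinarith [mul_log_sub_le_log_factorial n, mul_le_mul_of_nonneg_left htail hn'.le]

theorem abs_sum_primesLE_log_div_sub_log_le {n : ℕ} (hn : 0 < n) :
    |∑ p ∈ n.primesLE, log p / p - log n| ≤
      log 4 + 1 + ∑' m : ℕ, log m / (m * (m - 1)) := by
  have htail : 0 ≤ ∑' m : ℕ, log m / (m * (m - 1)) := tsum_nonneg log_div_mul_sub_one_nonneg
  have hlog4 : 0 ≤ log 4 := log_nonneg (by norm_num)
  rw [abs_le]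
  constructor
  · linarith [log_sub_le_sum_primesLE_log_div hn]
  · linarith [sum_primesLE_log_div_le n]

theorem abs_log_natFloor_sub_log_le {x : ℝ} (hx : 1 ≤ x) : |log ⌊x⌋₊ - log x| ≤ log 2 := by
  have hn : (1 : ℝ) ≤ ⌊x⌋₊ := by exact_mod_cast Nat.one_le_floor_iff x |>.2 hx
  have hle : log ⌊x⌋₊ ≤ log x := log_le_log (by linarith) (Nat.floor_le (by linarith))
  have hlt : log x ≤ log 2 + log ⌊x⌋₊ := by
    rw [← log_mul two_ne_zero (by positivity)]
    exact log_le_log (by linarith) (by linarith [Nat.lt_floor_add_one x])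
  rw [abs_sub_comm, abs_of_nonneg (by linarith)]
  linarith

end Real

theorem mertens_first :
    ∃ M : ℝ, ∀ x : ℝ, 2 ≤ x →
      |(∑ p ∈ (Finset.Iic ⌊x⌋₊).filter Nat.Prime, Real.log p / p) - Real.log x| ≤ M := by
  refine ⟨log 4 + 1 + (∑' m : ℕ, log m / (m * (m - 1))) + log 2, fun x hx => ?_⟩
  have hn : 0 < ⌊x⌋₊ := Nat.floor_pos.2 (by linarith)
  rw [← Nat.range_succ_eq_Iic, ← Nat.primesLE_eq_filter_range]
  calc _ ≤ |∑ p ∈ ⌊x⌋₊.primesLE, log p / p - log ⌊x⌋₊| + |log ⌊x⌋₊ - log x| :=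
        abs_sub_le _ _ _
    _ ≤ _ := add_le_add (abs_sum_primesLE_log_div_sub_log_le hn)
      (abs_log_natFloor_sub_log_le (by linarith))
end

section
/- For every natural number m ≥ 1, with a = log 2: ∫_{0}^{1/2} (log(1−t))^m / t dt = (−a)^{m+1} + (−1)^m m! ζ(m+1) + (−1)^{m−1} ∑_{s=1}^{m} (m!/(m−s)!) a^{m−s} Li_{s+1}(1/2). -/
/-!
Substituting `x = 1 - t` gives `∫_{1/2}^1 (log x)^m / (1 - x) dx`. Expanding `1/(1 - x)` as a
geometric series, the terms `x^k (log x)^m` all have the sign `(-1)^m` on `(1/2, 1)`, so the series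
may be integrated term by term. Each term has the explicit antiderivative
`x^{k+1} ∑_j (-1)^j A_m^j (log x)^{m-j} / (k+1)^{j+1}`: its values at `1` sum over `k` to
`(-1)^m m! ζ(m+1)` and its values at `1/2` to `∑_j (-1)^j A_m^j (-log 2)^{m-j} Li_{j+1}(1/2)`,
whose `j = 0` term is `(-log 2)^m · Li_1(1/2) = -(-log 2)^{m+1}`.
-/

open Finset Real

/-- The polylogarithm `Li_n(x) = ∑_{k ≥ 1} x^k / k^n`. -/
noncomputable def polylog (n : ℕ) (x : ℝ) : ℝ := ∑' k : ℕ, x ^ (k + 1) / ((k : ℝ) + 1) ^ n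

open MeasureTheory intervalIntegral

noncomputable def powLogAntideriv (m k : ℕ) (x : ℝ) : ℝ :=
  x ^ (k + 1) * ∑ j ∈ range (m + 1),
    (-1) ^ j * m.descFactorial j * log x ^ (m - j) / ((k : ℝ) + 1) ^ (j + 1)

lemma powLogAntideriv_succ (m k : ℕ) (x : ℝ) :
    powLogAntideriv (m + 1) k x
      = x ^ (k + 1) * log x ^ (m + 1) / (k + 1) - (m + 1) / (k + 1) * powLogAntideriv m k x := by
  have hk : (k : ℝ) + 1 ≠ 0 := by positivity
  have shift : ∀ j ∈ range (m + 1),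
      (-1 : ℝ) ^ (j + 1) * (m + 1).descFactorial (j + 1) * log x ^ (m + 1 - (j + 1))
          / ((k : ℝ) + 1) ^ (j + 1 + 1)
        = -((m + 1) / (k + 1) *
          ((-1) ^ j * m.descFactorial j * log x ^ (m - j) / ((k : ℝ) + 1) ^ (j + 1))) := by
    intro j _
    rw [Nat.succ_descFactorial_succ, Nat.succ_sub_succ]
    push_cast
    field_simp
    ring
  rw [powLogAntideriv, sum_range_succ', sum_congr rfl shift, sum_neg_distrib, ← mul_sum,
    powLogAntideriv]
  simp only [pow_zero, Nat.descFactorial_zero, Nat.cast_one, Nat.sub_zero, zero_add, pow_one]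
  ring

lemma powLogAntideriv_one (m k : ℕ) :
    powLogAntideriv m k 1 = (-1) ^ m * m.factorial / ((k : ℝ) + 1) ^ (m + 1) := by
  induction m with
  | zero => simp [powLogAntideriv]
  | succ m ih =>
    rw [powLogAntideriv_succ, ih, log_one, zero_pow m.succ_ne_zero, Nat.factorial_succ]
    push_cast
    field_simp
    ring

lemma hasDerivAt_powLogAntideriv (m k : ℕ) {x : ℝ} (hx : x ≠ 0) :
    HasDerivAt (powLogAntideriv m k) (x ^ k * log x ^ m) x := by
  have hk : (k : ℝ) + 1 ≠ 0 := by positivity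
  induction m with
  | zero =>
    have hF : powLogAntideriv 0 k = fun y : ℝ => y ^ (k + 1) / (k + 1) := by
      funext y
      simp [powLogAntideriv, div_eq_mul_inv]
    rw [hF]
    refine ((hasDerivAt_pow (k + 1) x).div_const _).congr_deriv ?_
    field_simp; push_cast; ring
  | succ m ih =>
    rw [funext (powLogAntideriv_succ m k)]
    refine ((((hasDerivAt_pow (k + 1) x).mul ((hasDerivAt_log hx).pow (m + 1))).div_const
      _).sub (ih.const_mul _)).congr_deriv ?_
    simp only [Pi.pow_apply]
    field_simp; push_cast; ring

lemma integral_pow_mul_log_pow (m k : ℕ) {a b : ℝ} (ha : 0 < a) (hb : 0 < b) :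
    ∫ x in a..b, x ^ k * log x ^ m = powLogAntideriv m k b - powLogAntideriv m k a := by
  have hpos : ∀ x ∈ Set.uIcc a b, x ≠ 0 := fun x hx =>
    (lt_of_lt_of_le (lt_min ha hb) hx.1).ne'
  refine integral_eq_sub_of_hasDerivAt (fun x hx => hasDerivAt_powLogAntideriv m k (hpos x hx)) ?_
  exact ContinuousOn.intervalIntegrable
    ((continuousOn_pow k).mul ((continuousOn_log.mono fun x hx => hpos x hx).pow m))

lemma summable_pow_succ_div_pow {a : ℝ} (ha : |a| < 1) (n : ℕ) :
    Summable (fun k : ℕ => a ^ (k + 1) / ((k : ℝ) + 1) ^ n) := by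
  refine Summable.of_norm_bounded ((summable_geometric_of_lt_one (abs_nonneg a) ha).mul_left |a|)
    fun k => ?_
  rw [norm_div, norm_pow, norm_pow, Real.norm_eq_abs a, ← pow_succ']
  refine div_le_self (by positivity) (one_le_pow₀ ?_)
  rw [Real.norm_of_nonneg (by positivity)]
  simp

lemma polylog_one {a : ℝ} (ha : |a| < 1) : polylog 1 a = -log (1 - a) := by
  simpa [polylog] using (hasSum_pow_div_log_of_abs_lt_one ha).tsum_eq

lemma powLogAntideriv_eq_sum (m k : ℕ) (x : ℝ) :
    powLogAntideriv m k x = ∑ j ∈ range (m + 1),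
      (-1) ^ j * m.descFactorial j * log x ^ (m - j)
        * (x ^ (k + 1) / ((k : ℝ) + 1) ^ (j + 1)) := by
  rw [powLogAntideriv, mul_sum]
  exact sum_congr rfl fun j _ => by ring

lemma hasSum_powLogAntideriv (m : ℕ) {a : ℝ} (ha : |a| < 1) :
    HasSum (fun k => powLogAntideriv m k a) (∑ j ∈ range (m + 1),
      (-1) ^ j * m.descFactorial j * log a ^ (m - j) * polylog (j + 1) a) := by
  simp only [powLogAntideriv_eq_sum]
  exact hasSum_sum fun j _ => ((summable_pow_succ_div_pow ha (j + 1)).hasSum).mul_left _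

lemma hasSum_powLogAntideriv_one {m : ℕ} (hm : 1 ≤ m) :
    HasSum (fun k => powLogAntideriv m k 1)
      ((-1) ^ m * m.factorial * ∑' n : ℕ, (1 : ℝ) / ((n : ℝ) + 1) ^ (m + 1)) := by
  have hzeta : Summable (fun n : ℕ => (1 : ℝ) / ((n : ℝ) + 1) ^ (m + 1)) := by
    simpa using (summable_nat_add_iff 1).mpr
      ((summable_one_div_nat_pow (p := m + 1)).mpr (by omega))
  simpa only [powLogAntideriv_one, mul_one_div] using
    hzeta.hasSum.mul_left ((-1 : ℝ) ^ m * m.factorial)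

lemma integral_norm_pow_mul_log_pow (m k : ℕ) {a : ℝ} (ha : 0 < a) (ha1 : a ≤ 1) :
    ∫ x in Set.Ioo a 1, ‖x ^ k * log x ^ m‖
      = (-1) ^ m * (powLogAntideriv m k 1 - powLogAntideriv m k a) := by
  have hnorm : ∀ x ∈ Set.Ioo a 1, ‖x ^ k * log x ^ m‖ = (-1) ^ m * (x ^ k * log x ^ m) := by
    intro x hx
    have hx0 : 0 < x := ha.trans hx.1
    rw [norm_mul, norm_pow, norm_pow, Real.norm_of_nonneg hx0.le, Real.norm_eq_abs,
      abs_of_nonpos (log_nonpos hx0.le hx.2.le)]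
    ring
  rw [setIntegral_congr_fun measurableSet_Ioo hnorm, MeasureTheory.integral_const_mul,
    ← integral_Ioc_eq_integral_Ioo, ← intervalIntegral.integral_of_le ha1,
    integral_pow_mul_log_pow m k ha one_pos]

lemma integral_log_pow_div_one_sub {m : ℕ} (hm : 1 ≤ m) {a : ℝ} (ha : 0 < a) (ha1 : a < 1) :
    ∫ x in a..1, log x ^ m / (1 - x)
      = (-1) ^ m * m.factorial * (∑' n : ℕ, (1 : ℝ) / ((n : ℝ) + 1) ^ (m + 1))
        - ∑ j ∈ range (m + 1),
            (-1) ^ j * m.descFactorial j * log a ^ (m - j) * polylog (j + 1) a := by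
  have hF := (hasSum_powLogAntideriv_one hm).sub
    (hasSum_powLogAntideriv m (abs_lt.mpr ⟨by linarith, ha1⟩))
  have hgeom : ∀ x ∈ Set.Ioo a 1, log x ^ m / (1 - x) = ∑' k : ℕ, x ^ k * log x ^ m := by
    intro x hx
    rw [tsum_mul_right, tsum_geometric_of_lt_one (ha.trans hx.1).le hx.2, div_eq_inv_mul]
  have hint : ∀ k : ℕ, IntegrableOn (fun x : ℝ => x ^ k * log x ^ m) (Set.Ioo a 1) := by
    intro k
    refine (ContinuousOn.integrableOn_Icc ?_).mono_set Set.Ioo_subset_Icc_self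
    exact (continuousOn_pow k).mul
      ((continuousOn_log.mono fun x hx => (ha.trans_le hx.1).ne').pow m)
  have hsum : Summable fun k : ℕ => ∫ x in Set.Ioo a 1, ‖x ^ k * log x ^ m‖ := by
    simp only [integral_norm_pow_mul_log_pow m _ ha ha1.le]
    exact hF.summable.mul_left _
  rw [intervalIntegral.integral_of_le ha1.le, integral_Ioc_eq_integral_Ioo,
    setIntegral_congr_fun measurableSet_Ioo hgeom,
    ← integral_tsum_of_summable_integral_norm hint hsum, ← hF.tsum_eq]
  refine tsum_congr fun k => ?_
  rw [← integral_Ioc_eq_integral_Ioo, ← intervalIntegral.integral_of_le ha1.le,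
    integral_pow_mul_log_pow m k ha one_pos]

lemma neg_one_pow_mul_neg_pow_sub {j m : ℕ} (h : j ≤ m) (x : ℝ) :
    (-1) ^ j * (-x) ^ (m - j) = (-1) ^ m * x ^ (m - j) := by
  rw [neg_pow x, ← mul_assoc, ← pow_add, Nat.add_sub_cancel' h]

lemma integral_log_one_sub_pow_div (m : ℕ) (b : ℝ) :
    ∫ t in (0 : ℝ)..b, log (1 - t) ^ m / t = ∫ x in (1 - b)..1, log x ^ m / (1 - x) := by
  simpa using intervalIntegral.integral_comp_sub_left (a := 0) (b := b)
    (fun x => log x ^ m / (1 - x)) 1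

theorem log_pow_integral (m : ℕ) (hm : 1 ≤ m) :
    ∫ t in (0 : ℝ)..(1 / 2), (Real.log (1 - t)) ^ m / t
      = (-(Real.log 2)) ^ (m + 1)
        + (-1 : ℝ) ^ m * m.factorial * (∑' n : ℕ, (1 : ℝ) / ((n : ℝ) + 1) ^ (m + 1))
        + (-1 : ℝ) ^ (m - 1) * ∑ s ∈ Finset.Icc 1 m,
            (m.descFactorial s : ℝ) * (Real.log 2) ^ (m - s) * polylog (s + 1) (1 / 2) := by
  have hlog : log (1 / 2) = -log 2 := by rw [one_div, log_inv]
  have hli : polylog 1 (1 / 2) = log 2 := by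
    rw [polylog_one (by norm_num), show (1 : ℝ) - 1 / 2 = 1 / 2 by norm_num, hlog, neg_neg]
  have hterm : ∀ s ∈ Icc 1 m, (-1) ^ s * (m.descFactorial s : ℝ) * (-log 2) ^ (m - s)
      * polylog (s + 1) (1 / 2)
      = (-1) ^ m * ((m.descFactorial s : ℝ) * log 2 ^ (m - s) * polylog (s + 1) (1 / 2)) :=
    fun s hs => by
      rw [mul_right_comm _ (m.descFactorial s : ℝ),
        neg_one_pow_mul_neg_pow_sub (mem_Icc.mp hs).2]
      ring
  rw [integral_log_one_sub_pow_div, show (1 : ℝ) - 1 / 2 = 1 / 2 by norm_num,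
    integral_log_pow_div_one_sub hm (by norm_num) (by norm_num), range_eq_Ico,
    sum_eq_sum_Ico_succ_bot (by omega : 0 < m + 1), zero_add, Ico_add_one_right_eq_Icc, hlog,
    sum_congr rfl hterm, ← mul_sum, hli]
  obtain ⟨n, rfl⟩ := Nat.exists_eq_add_of_le' hm
  simp only [pow_zero, Nat.descFactorial_zero, Nat.cast_one, Nat.sub_zero, Nat.add_sub_cancel]
  ring
end
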